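/- arXiv:2004.13758 — 2 statements merged into one kernel-verified Lean document; each statement's English description precedes it below -/
import Mathlib

section
/- Assume |V| ≥ 3. Then: (i) every point (x, y, y′, w) of S satisfies ∑_{v∈V} x_v ≥ y + y′ (hence this inequality is valid for the route-design polytope P^RDP); and (ii) there exists an affinely independent family of |V| + 3 points of S, each of which satisfies ∑_{v∈V} x_v = y + y′ (so the inequality is facet defining for the (|V|+3)-dimensional polytope P^RDP). -/
/-!
Validity: `w ≥ 0` and `w - ∑ x + y ≤ 0` give `y ≤ ∑ x`, which is the claim when `y′ = 0`;
when `y′ = 1` we have `y = 1` and the claim is `2 y′ ≤ ∑ x`.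

Facet: pick `a ≠ b` in `V`. The points `0`, `(e_v, 1, 0, 0)` for `v ∈ V` and
`(e_a + e_b, 1, 1, w)` for `w ∈ {0, 1}` lie in `S` and satisfy the inequality with equality.
The `|V| + 2` nonzero ones are linearly independent (read off the `w`-coordinate, then the
`y′`-coordinate, then `x`), so together with `0` they are affinely independent.
-/

/-- The set `S` of integral feasible points `(x, y, y′, w)` of the route-design problem on an edge:
`x v ∈ {0,1}`, `y ∈ {0,1}`, `y′ ∈ {0,1}`, `w ≥ 0`, `∑ x v ≥ 2 y′`, `w − ∑ x v + y ≤ 0`,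
`x v ≤ y` for all `v`, and `y′ ≤ y`.  Its convex hull is the polytope `P^RDP`. -/
def RDPset (V : Type*) [Fintype V] : Set ((V → ℝ) × ℝ × ℝ × ℝ) :=
  {p | (∀ v, p.1 v = 0 ∨ p.1 v = 1) ∧ (p.2.1 = 0 ∨ p.2.1 = 1) ∧
       (p.2.2.1 = 0 ∨ p.2.2.1 = 1) ∧ 0 ≤ p.2.2.2 ∧
       2 * p.2.2.1 ≤ ∑ v, p.1 v ∧
       p.2.2.2 - (∑ v, p.1 v) + p.2.1 ≤ 0 ∧
       (∀ v, p.1 v ≤ p.2.1) ∧ p.2.2.1 ≤ p.2.1}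

theorem affineIndependent_option_elim_zero {k V ι : Type*} [Ring k] [AddCommGroup V]
    [Module k V] [Fintype ι] {v : ι → V} (hv : LinearIndependent k v) :
    AffineIndependent k (fun o : Option ι => o.elim 0 v) := by
  rw [affineIndependent_iff_of_fintype]
  intro c hc hcv
  rw [Finset.weightedVSub_eq_linear_combination _ hc, Fintype.sum_option] at hcv
  simp only [Option.elim_none, smul_zero, zero_add, Option.elim_some] at hcv
  have hsome : ∀ i, c (some i) = 0 := Fintype.linearIndependent_iff.mp hv _ hcv
  rintro (_ | i)
  · simpa [Fintype.sum_option, hsome] using hc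
  · exact hsome i

namespace RDPset

variable {V : Type*} [Fintype V]

theorem add_le_sum {p : (V → ℝ) × ℝ × ℝ × ℝ} (hp : p ∈ RDPset V) :
    p.2.1 + p.2.2.1 ≤ ∑ v, p.1 v := by
  obtain ⟨-, hy, hy', hw, h2y', hwy, -, hy'y⟩ := hp
  rcases hy' with hy' | hy' <;> rcases hy with hy | hy <;> linarith

theorem zero_mem : (0 : (V → ℝ) × ℝ × ℝ × ℝ) ∈ RDPset V := by
  simp [RDPset]

variable [DecidableEq V]

def unitPoint (v : V) : (V → ℝ) × ℝ × ℝ × ℝ := (Pi.single v 1, 1, 0, 0)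

def pairPoint (a b : V) (w : ℝ) : (V → ℝ) × ℝ × ℝ × ℝ := (Pi.single a 1 + Pi.single b 1, 1, 1, w)

def facetPoint (a b : V) : V ⊕ Bool → (V → ℝ) × ℝ × ℝ × ℝ :=
  Sum.elim unitPoint fun t => pairPoint a b (if t then 1 else 0)

theorem linearIndependent_facetPoint (a b : V) : LinearIndependent ℝ (facetPoint a b) := by
  rw [Fintype.linearIndependent_iff]
  intro c hc
  simp only [facetPoint, Fintype.sum_sum_type, Fintype.sum_bool, Sum.elim_inl, Sum.elim_inr,
    unitPoint, pairPoint, if_true, Bool.false_eq_true, if_false] at hc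
  have hw : c (.inr true) = 0 := by simpa [Prod.snd_sum] using congrArg (·.2.2.2) hc
  have hy' : c (.inr false) = 0 := by simpa [Prod.snd_sum, hw] using congrArg (·.2.2.1) hc
  have hx (v : V) : c (.inl v) = 0 := by
    simpa [Prod.fst_sum, hw, hy', Pi.single_apply] using congrFun (congrArg Prod.fst hc) v
  rintro (v | _ | _)
  exacts [hx v, hy', hw]

theorem sum_unitPoint_fst (v : V) : ∑ u, (unitPoint v).1 u = 1 := by
  simp [unitPoint]

theorem sum_pairPoint_fst (a b : V) (w : ℝ) : ∑ u, (pairPoint a b w).1 u = 2 := by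
  simp [pairPoint, Finset.sum_add_distrib, one_add_one_eq_two]

theorem unitPoint_mem (v : V) : unitPoint v ∈ RDPset V := by
  have hbin (u : V) : (unitPoint v).1 u = 0 ∨ (unitPoint v).1 u = 1 := by
    rcases eq_or_ne u v with rfl | huv <;> simp [unitPoint, *]
  refine ⟨hbin, Or.inr rfl, Or.inl rfl, le_rfl, ?_, ?_, fun u => ?_, zero_le_one⟩
  · rw [sum_unitPoint_fst]; norm_num [unitPoint]
  · rw [sum_unitPoint_fst]; norm_num [unitPoint]
  · rcases hbin u with h | h <;> rw [h] <;> norm_num [unitPoint]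

theorem pairPoint_mem {a b : V} (hab : a ≠ b) {w : ℝ} (hw₀ : 0 ≤ w) (hw₁ : w ≤ 1) :
    pairPoint a b w ∈ RDPset V := by
  have hbin (u : V) : (pairPoint a b w).1 u = 0 ∨ (pairPoint a b w).1 u = 1 := by
    rcases eq_or_ne u a with rfl | hua
    · simp [pairPoint, hab]
    · rcases eq_or_ne u b with rfl | hub <;> simp [pairPoint, *]
  refine ⟨hbin, Or.inr rfl, Or.inr rfl, hw₀, ?_, ?_, fun u => ?_, le_rfl⟩
  · rw [sum_pairPoint_fst]; norm_num [pairPoint]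
  · rw [sum_pairPoint_fst]; simp only [pairPoint]; linarith
  · rcases hbin u with h | h <;> rw [h] <;> norm_num [pairPoint]

theorem facetPoint_mem {a b : V} (hab : a ≠ b) : ∀ i, facetPoint a b i ∈ RDPset V
  | .inl v => unitPoint_mem v
  | .inr t => pairPoint_mem hab (by split_ifs <;> norm_num) (by split_ifs <;> norm_num)

theorem sum_facetPoint_fst (a b : V) :
    ∀ i, ∑ u, (facetPoint a b i).1 u = (facetPoint a b i).2.1 + (facetPoint a b i).2.2.1
  | .inl v => by rw [facetPoint, Sum.elim_inl, sum_unitPoint_fst]; norm_num [unitPoint]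
  | .inr t => by rw [facetPoint, Sum.elim_inr, sum_pairPoint_fst]; norm_num [pairPoint]

end RDPset

/-- for `|V| ≥ 3`, the inequality `∑ x v ≥ y + y′` is valid for every point of `S`
(hence for `P^RDP`), and there are `|V| + 3` affinely independent points of `S` satisfying it
with equality (so it is facet defining for the `(|V|+3)`-dimensional polytope `P^RDP`). -/
theorem RDP_facet_sum_ge_y_add_y' (V : Type*) [Fintype V] (hV : 3 ≤ Fintype.card V) :
    (∀ p ∈ RDPset V, p.2.1 + p.2.2.1 ≤ ∑ v, p.1 v) ∧
    ∃ F : Fin (Fintype.card V + 3) → ((V → ℝ) × ℝ × ℝ × ℝ),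
      AffineIndependent ℝ F ∧
      ∀ i, F i ∈ RDPset V ∧ (∑ v, (F i).1 v) = (F i).2.1 + (F i).2.2.1 := by
  classical
  refine ⟨fun p => RDPset.add_le_sum, ?_⟩
  have : Nontrivial V := Fintype.one_lt_card_iff_nontrivial.mp (by omega)
  obtain ⟨a, b, hab⟩ := exists_pair_ne V
  let G : Option (V ⊕ Bool) → (V → ℝ) × ℝ × ℝ × ℝ := fun o => o.elim 0 (RDPset.facetPoint a b)
  have hG : ∀ o, G o ∈ RDPset V ∧ ∑ v, (G o).1 v = (G o).2.1 + (G o).2.2.1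
    | none => ⟨RDPset.zero_mem, by simp [G]⟩
    | some i => ⟨RDPset.facetPoint_mem hab i, RDPset.sum_facetPoint_fst a b i⟩
  let e : Fin (Fintype.card V + 3) ≃ Option (V ⊕ Bool) :=
    (Fintype.equivFinOfCardEq (by simp)).symm
  exact ⟨G ∘ e, (affineIndependent_equiv e).2
    (affineIndependent_option_elim_zero (RDPset.linearIndependent_facetPoint a b)),
    fun i => hG (e i)⟩
end

section
/- Let V be a finite set with |V| ≥ 2 and define the polytope P₁ = {(x, w) ∈ (V → ℝ) × ℝ : ∑_{v∈V} x_v ≥ 2, w − ∑_{v∈V} x_v + 1 ≤ 0, 0 ≤ x_v ≤ 1 for every v ∈ V, and w ≥ 0}. Then every extreme point (x, w) of P₁ is integral: x_v ∈ {0,1} for every v ∈ V and w is a (nonnegative) integer. -/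
/-!
Write `Q = [0,1]^V ∩ {∑ x ≥ 2}`. Then `P₁` is the region `0 ≤ w ≤ ∑ x - 1` over `Q`, between two
affine functions that are nonnegative on `Q`. At an extreme point `w` is one of the two bounds,
and `x` is extreme in `Q`, since a segment of `Q` through `x` lifts along the active bound.
An extreme point of `Q` has no two fractional coordinates (shift mass from one to the other)
and, the right-hand side `2` being an integer, not exactly one either (the sum constraint then has
slack). So `x` is a 0/1 vector and `w ∈ {0, ∑ x - 1}` is a natural number.
-/

open Set

theorem eq_zero_of_add_mem_of_sub_mem_of_mem_extremePoints {𝕜 E : Type*} [Ring 𝕜] [LinearOrder 𝕜]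
    [IsStrictOrderedRing 𝕜] [Invertible (2 : 𝕜)] [AddCommGroup E] [Module 𝕜 E]
    {S : Set E} {p d : E} (hp : p ∈ S.extremePoints 𝕜) (hadd : p + d ∈ S) (hsub : p - d ∈ S) :
    d = 0 :=
  add_eq_left.mp (hp.2 hadd hsub (mem_openSegment_add_sub p d))

def underGraph {E 𝕜 : Type*} [Preorder 𝕜] [Zero 𝕜] (Q : Set E) (f : E → 𝕜) : Set (E × 𝕜) :=
  {q | q.1 ∈ Q ∧ q.2 ∈ Icc 0 (f q.1)}

section underGraph

variable {𝕜 E : Type*} [Field 𝕜] [LinearOrder 𝕜] [IsStrictOrderedRing 𝕜] [AddCommGroup E]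
  [Module 𝕜 E] {Q : Set E} {p : E × 𝕜}

theorem snd_eq_zero_or_eq_of_mem_extremePoints_underGraph {f : E → 𝕜}
    (hp : p ∈ (underGraph Q f).extremePoints 𝕜) : p.2 = 0 ∨ p.2 = f p.1 := by
  obtain ⟨hpQ, hp0, hpf⟩ := hp.1
  by_contra! hne
  set ε := min p.2 (f p.1 - p.2)
  have hε : 0 < ε := lt_min (hp0.lt_of_ne' hne.1) (sub_pos.2 (hpf.lt_of_ne hne.2))
  have hεp : ε ≤ p.2 := min_le_left _ _
  have hεf : ε ≤ f p.1 - p.2 := min_le_right _ _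
  have := eq_zero_of_add_mem_of_sub_mem_of_mem_extremePoints (d := ((0 : E), ε)) hp
    ⟨by simpa using hpQ, by rw [Prod.snd_add, Prod.fst_add, add_zero]; constructor <;> linarith⟩
    ⟨by simpa using hpQ, by rw [Prod.snd_sub, Prod.fst_sub, sub_zero]; constructor <;> linarith⟩
  exact hε.ne' (congrArg Prod.snd this)

theorem fst_mem_extremePoints_of_mem_extremePoints_underGraph {f : E →ᵃ[𝕜] 𝕜}
    (hf : ∀ x ∈ Q, 0 ≤ f x) (hp : p ∈ (underGraph Q f).extremePoints 𝕜) :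
    p.1 ∈ Q.extremePoints 𝕜 := by
  refine ⟨hp.1.1, fun a ha b hb ⟨α, β, hα, hβ, hαβ, hab⟩ => ?_⟩
  have key : ∀ g : E →ᵃ[𝕜] 𝕜, (∀ x ∈ Q, g x ∈ Icc 0 (f x)) → p.2 = g p.1 → a = p.1 := by
    intro g hg hpg
    have hcombo : α • (a, g a) + β • (b, g b) = p := by
      ext
      · simpa using hab
      · simp [hpg, ← hab, Convex.combo_affine_apply hαβ]
    exact congrArg Prod.fst <| hp.2 (x₁ := (a, g a)) (x₂ := (b, g b)) ⟨ha, hg a ha⟩ ⟨hb, hg b hb⟩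
      ⟨α, β, hα, hβ, hαβ, hcombo⟩
  rcases snd_eq_zero_or_eq_of_mem_extremePoints_underGraph hp with h0 | hf'
  · exact key 0 (fun x hx => ⟨le_rfl, hf x hx⟩) h0
  · exact key f (fun x hx => ⟨hf x hx, le_rfl⟩) hf'

end underGraph

theorem exists_nat_sum_eq_of_forall_eq_zero_or_eq_one {ι R : Type*} [Semiring R] {s : Finset ι}
    {f : ι → R} (hf : ∀ i ∈ s, f i = 0 ∨ f i = 1) : ∃ m : ℕ, ∑ i ∈ s, f i = m := by
  classical
  refine ⟨(s.filter (f · = 1)).card, ?_⟩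
  rw [Finset.natCast_card_filter]
  exact Finset.sum_congr rfl fun i hi => by rcases hf i hi with h | h <;> simp [h]

def cubeSumGe (V : Type*) [Fintype V] (k : ℝ) : Set (V → ℝ) :=
  {x | (∀ v, x v ∈ Icc 0 1) ∧ k ≤ ∑ v, x v}

namespace cubeSumGe

variable {V : Type*} [Fintype V] {k : ℝ} {x : V → ℝ}

theorem eq_of_mem_Ioo_of_mem_Ioo (hx : x ∈ (cubeSumGe V k).extremePoints ℝ) {u v : V}
    (hu : x u ∈ Ioo 0 1) (hv : x v ∈ Ioo 0 1) : u = v := by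
  classical
  by_contra huv
  set ε := min (min (x u) (1 - x u)) (min (x v) (1 - x v))
  have hε : 0 < ε := by simp only [ε, lt_min_iff, sub_pos]; exact ⟨⟨hu.1, hu.2⟩, hv.1, hv.2⟩
  have hεu : ε ≤ x u ∧ ε ≤ 1 - x u := ⟨by simp [ε], by simp [ε]⟩
  have hεv : ε ≤ x v ∧ ε ≤ 1 - x v := ⟨by simp [ε], by simp [ε]⟩
  have hmem : ∀ s, |s| ≤ ε → x + (Pi.single u s - Pi.single v s) ∈ cubeSumGe V k := by
    intro s hs
    rw [abs_le] at hs
    refine ⟨fun t => ?_, by simpa [Finset.sum_add_distrib] using hx.1.2⟩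
    have := hx.1.1 t
    simp only [mem_Icc, Pi.add_apply, Pi.sub_apply, Pi.single_apply] at this ⊢
    split_ifs <;> subst_vars
    · exact absurd rfl huv
    all_goals constructor <;> linarith
  have := eq_zero_of_add_mem_of_sub_mem_of_mem_extremePoints hx (hmem ε (by simp [abs_of_pos hε]))
    (by
      convert hmem (-ε) (by simp [abs_of_pos hε]) using 1
      rw [Pi.single_neg, Pi.single_neg]; abel)
  simpa [huv, hε.ne'] using congrFun this u

theorem eq_zero_or_eq_one_of_mem_extremePoints {k : ℤ}
    (hx : x ∈ (cubeSumGe V k).extremePoints ℝ) (v : V) : x v = 0 ∨ x v = 1 := by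
  classical
  have mem_Ioo_of_ne {u : V} (h0 : x u ≠ 0) (h1 : x u ≠ 1) : x u ∈ Ioo 0 1 :=
    ⟨(hx.1.1 u).1.lt_of_ne' h0, (hx.1.1 u).2.lt_of_ne h1⟩
  by_contra! hv
  have hvI := mem_Ioo_of_ne hv.1 hv.2
  have hothers : ∀ u ∈ Finset.univ.erase v, x u = 0 ∨ x u = 1 := fun u hu => by
    by_contra! h
    exact Finset.ne_of_mem_erase hu (eq_of_mem_Ioo_of_mem_Ioo hx (mem_Ioo_of_ne h.1 h.2) hvI)
  obtain ⟨m, hm⟩ := exists_nat_sum_eq_of_forall_eq_zero_or_eq_one hothers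
  have hsum : ∑ t, x t = x v + m := by rw [← Finset.add_sum_erase _ _ (Finset.mem_univ v), hm]
  -- `k ≤ x v + m` with `x v < 1` forces `k ≤ m` because both are integers
  have hkm : (k : ℝ) ≤ m := by
    have : (k : ℝ) < m + 1 := by linarith [hx.1.2, hvI.2]
    exact_mod_cast Int.lt_add_one_iff.mp (by exact_mod_cast this)
  set ε := min (min (x v) (1 - x v)) (∑ t, x t - k)
  have hε : 0 < ε := by simp only [ε, lt_min_iff, sub_pos]; exact ⟨⟨hvI.1, hvI.2⟩, by linarith [hvI.1]⟩
  have hεv : ε ≤ x v ∧ ε ≤ 1 - x v := ⟨by simp [ε], by simp [ε]⟩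
  have hεk : ε ≤ ∑ t, x t - k := by simp [ε]
  have hmem : ∀ s, |s| ≤ ε → x + Pi.single v s ∈ cubeSumGe V k := by
    intro s hs
    rw [abs_le] at hs
    refine ⟨fun t => ?_, by
      simp only [Pi.add_apply, Finset.sum_add_distrib, Finset.sum_pi_single', Finset.mem_univ,
        if_true]
      linarith⟩
    have := hx.1.1 t
    simp only [mem_Icc, Pi.add_apply, Pi.single_apply] at this ⊢
    split_ifs <;> subst_vars
    all_goals constructor <;> linarith
  have := eq_zero_of_add_mem_of_sub_mem_of_mem_extremePoints hx (hmem ε (by simp [abs_of_pos hε]))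
    (by simpa [sub_eq_add_neg, Pi.single_neg] using hmem (-ε) (by simp [abs_of_pos hε]))
  simpa [hε.ne'] using congrFun this v

end cubeSumGe

theorem P1_extreme_points_integral_general (V : Type*) [Fintype V]
    (p : (V → ℝ) × ℝ)
    (hp : p ∈ Set.extremePoints ℝ
      {q : (V → ℝ) × ℝ | 2 ≤ ∑ v, q.1 v ∧ q.2 - (∑ v, q.1 v) + 1 ≤ 0 ∧
        (∀ v, 0 ≤ q.1 v ∧ q.1 v ≤ 1) ∧ 0 ≤ q.2}) :
    (∀ v, p.1 v = 0 ∨ p.1 v = 1) ∧ ∃ k : ℕ, p.2 = (k : ℝ) := by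
  let f : (V → ℝ) →ᵃ[ℝ] ℝ :=
    (∑ v, LinearMap.proj v : (V → ℝ) →ₗ[ℝ] ℝ).toAffineMap - AffineMap.const ℝ (V → ℝ) (1 : ℝ)
  have hf : ∀ x, f x = ∑ v, x v - 1 := by simp [f]
  have hP : {q : (V → ℝ) × ℝ | 2 ≤ ∑ v, q.1 v ∧ q.2 - (∑ v, q.1 v) + 1 ≤ 0 ∧
      (∀ v, 0 ≤ q.1 v ∧ q.1 v ≤ 1) ∧ 0 ≤ q.2} = underGraph (cubeSumGe V ((2 : ℤ) : ℝ)) f := by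
    ext q
    simp only [underGraph, cubeSumGe, mem_ofPred_eq, mem_Icc, hf, Int.cast_ofNat]
    constructor
    · rintro ⟨h1, h2, h3, h4⟩
      exact ⟨⟨h3, h1⟩, h4, by linarith⟩
    · rintro ⟨⟨h3, h1⟩, h4, h5⟩
      exact ⟨h1, by linarith, h3, h4⟩
  rw [hP] at hp
  have hx := cubeSumGe.eq_zero_or_eq_one_of_mem_extremePoints
    (fst_mem_extremePoints_of_mem_extremePoints_underGraph
      (fun x hx => by rw [hf]; linarith [show (2 : ℝ) ≤ ∑ v, x v by exact_mod_cast hx.2]) hp)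
  refine ⟨hx, ?_⟩
  obtain ⟨m, hm⟩ := exists_nat_sum_eq_of_forall_eq_zero_or_eq_one fun v (_ : v ∈ Finset.univ) => hx v
  rcases snd_eq_zero_or_eq_of_mem_extremePoints_underGraph hp with hw | hw
  · exact ⟨0, by simp [hw]⟩
  · have hm2 : 2 ≤ m := by exact_mod_cast hm ▸ hp.1.1.2
    exact ⟨m - 1, by rw [hw, hf, hm, Nat.cast_sub (one_le_two.trans hm2), Nat.cast_one]⟩

/-- every extreme point `(x, w)` of the polytope
`P₁ = {(x, w) : ∑ x v ≥ 2, w − ∑ x v + 1 ≤ 0, 0 ≤ x v ≤ 1, w ≥ 0}` is integral. -/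
theorem P1_extreme_points_integral (V : Type*) [Fintype V] (hV : 2 ≤ Fintype.card V)
    (p : (V → ℝ) × ℝ)
    (hp : p ∈ Set.extremePoints ℝ
      {q : (V → ℝ) × ℝ | 2 ≤ ∑ v, q.1 v ∧ q.2 - (∑ v, q.1 v) + 1 ≤ 0 ∧
        (∀ v, 0 ≤ q.1 v ∧ q.1 v ≤ 1) ∧ 0 ≤ q.2}) :
    (∀ v, p.1 v = 0 ∨ p.1 v = 1) ∧ ∃ k : ℕ, p.2 = (k : ℝ) :=
  P1_extreme_points_integral_general V p hp
end
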